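/- Let N ≥ 1 be an integer with canonical Ostrowski digits b_n, …, b_0 with respect to α, and let 0 ≤ r ≤ n be an index with b_r ≠ 0. Then the signed fractional part of Σ_{u=r+1}^{n} b_u·q_u·α (an empty sum if r = n) satisfies −1/q'_{r+1} + 1/q'_{r+2} < (−1)^r·{{ Σ_{u=r+1}^{n} b_u·q_u·α }} < 1/q'_{r+2}; in particular ‖Σ_{u=r+1}^{n} b_u·q_u·α‖ < 1/q'_{r+1}. -/

import Mathlib

open Finset

/-- Complete quotients of `α`: `a'₀ = α`, `a'_{n+1} = 1/(a'_n - ⌊a'_n⌋)`. -/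
noncomputable def cq (α : ℝ) : ℕ → ℝ
  | 0 => α
  | n + 1 => 1 / (cq α n - (⌊cq α n⌋ : ℝ))

/-- Partial quotients `a_n = ⌊a'_n⌋`. -/
noncomputable def aq (α : ℝ) (n : ℕ) : ℕ := (⌊cq α n⌋).toNat

/-- Quasiperiods: `q₋₂ = 1`, `q₋₁ = 0`, `q_n = a_n q_{n-1} + q_{n-2}` (so `q₀ = 1`, `q₁ = a₁`). -/
noncomputable def qp (α : ℝ) : ℕ → ℕ
  | 0 => 1
  | 1 => aq α 1
  | n + 2 => aq α (n + 2) * qp α (n + 1) + qp α n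

/-- Error periods: `q'_n = a'_n q_{n-1} + q_{n-2}` (so `q'₀ = 1`, `q'₁ = a'₁`). -/
noncomputable def qe (α : ℝ) : ℕ → ℝ
  | 0 => 1
  | 1 => cq α 1
  | n + 2 => cq α (n + 2) * (qp α (n + 1) : ℝ) + (qp α n : ℝ)

/-- Convergent numerators: `p₋₂ = 0`, `p₋₁ = 1`, `p_n = a_n p_{n-1} + p_{n-2}`
(so for `0 < α < 1`, `p₀ = 0`, `p₁ = 1`). -/
noncomputable def pn (α : ℝ) : ℕ → ℕ
  | 0 => 0
  | 1 => 1
  | n + 2 => aq α (n + 2) * pn α (n + 1) + pn α n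

/-- `p'_n = a'_n p_{n-1} + p_{n-2}` (so for `0 < α < 1`, `p'₀ = α`, `p'₁ = 1`). -/
noncomputable def pe (α : ℝ) : ℕ → ℝ
  | 0 => α
  | 1 => 1
  | n + 2 => cq α (n + 2) * (pn α (n + 1) : ℝ) + (pn α n : ℝ)

/-- `ostN α N = max {r : q_r ≤ N}` (quasiperiods satisfy `q_r ≥ r`, so the bound `N` suffices). -/
noncomputable def ostN (α : ℝ) (N : ℕ) : ℕ :=
  Nat.findGreatest (fun r => qp α r ≤ N) N

/-- The remainders of the greedy Ostrowski algorithm: `ostM α N k = M_{n-k}` where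
`M_n = N` and `M_{r-1} = M_r % q_r`. -/
noncomputable def ostM (α : ℝ) (N : ℕ) : ℕ → ℕ
  | 0 => N
  | k + 1 => ostM α N k % qp α (ostN α N - k)

/-- The canonical (greedy) Ostrowski digits: `b_r = ⌊M_r / q_r⌋`. -/
noncomputable def ostDigit (α : ℝ) (N r : ℕ) : ℕ :=
  ostM α N (ostN α N - r) / qp α r

variable {α : ℝ}

lemma cq_irr (hirr : Irrational α) : ∀ n, Irrational (cq α n)
  | 0 => hirr
  | n + 1 => by
    have h : Irrational (cq α n) := cq_irr hirr n
    have : Irrational (cq α n - (⌊cq α n⌋ : ℝ)) := h.sub_intCast _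
    simpa [cq, one_div] using this.inv

lemma cq_fract_pos (hirr : Irrational α) (n : ℕ) :
    0 < cq α n - (⌊cq α n⌋ : ℝ) := by
  have := (cq_irr hirr n).ne_int ⌊cq α n⌋
  have h2 : (0:ℝ) < Int.fract (cq α n) := Int.fract_pos.2 this
  rwa [Int.self_sub_floor]

lemma cq_fract_lt_one (n : ℕ) : cq α n - (⌊cq α n⌋ : ℝ) < 1 := by
  have := Int.fract_lt_one (cq α n)
  rwa [Int.self_sub_floor]

lemma cq_gt_one (hirr : Irrational α) (n : ℕ) : 1 < cq α (n + 1) := by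
  rw [cq]
  rw [one_lt_div (cq_fract_pos hirr n)]
  exact cq_fract_lt_one n

lemma cq_pos (hirr : Irrational α) (h0 : 0 < α) (n : ℕ) : 0 < cq α n := by
  cases n with
  | zero => exact h0
  | succ n => exact lt_trans one_pos (cq_gt_one hirr n)

lemma aq_cast (hirr : Irrational α) (h0 : 0 < α) (n : ℕ) :
    (aq α n : ℝ) = (⌊cq α n⌋ : ℝ) := by
  have : (0:ℤ) ≤ ⌊cq α n⌋ := Int.floor_nonneg.2 (cq_pos hirr h0 n).le
  rw [aq]
  exact_mod_cast congrArg (fun z : ℤ => (z:ℝ)) (Int.toNat_of_nonneg this)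

lemma aq_pos (hirr : Irrational α) (n : ℕ) : 1 ≤ aq α (n + 1) := by
  have : (1:ℤ) ≤ ⌊cq α (n+1)⌋ := Int.le_floor.2 (by exact_mod_cast (cq_gt_one hirr n).le)
  simp [aq]
  omega

lemma inv_cq (hirr : Irrational α) (h0 : 0 < α) (h1 : α < 1) (n : ℕ) :
    1 / cq α (n + 1) = cq α n - (aq α n : ℝ) := by
  rw [aq_cast hirr h0, cq, one_div_one_div]

lemma cq_one (h0 : 0 < α) (h1 : α < 1) : cq α 1 = 1 / α := by
  have : ⌊α⌋ = 0 := by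
    rw [Int.floor_eq_zero_iff]; constructor <;> [exact h0.le; exact h1]
  simp [cq, this]

lemma qp_pos (hirr : Irrational α) : ∀ n, 0 < qp α n
  | 0 => by simp [qp]
  | 1 => by show 0 < aq α 1; exact aq_pos hirr 0
  | n + 2 => by
    have := qp_pos hirr n
    simp only [qp]; positivity

lemma qp_mono (hirr : Irrational α) : ∀ n, qp α n ≤ qp α (n + 1)
  | 0 => by simpa [qp] using aq_pos hirr 0
  | n + 1 => by
    have h1 := qp_pos hirr n
    have h2 := aq_pos hirr (n + 1)
    have h3 := qp_pos hirr (n+1)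
    show qp α (n+1) ≤ qp α (n+2)
    rw [qp]
    nlinarith

lemma qp_mono' (hirr : Irrational α) {m n : ℕ} (h : m ≤ n) : qp α m ≤ qp α n := by
  induction n with
  | zero => simpa [Nat.le_zero.1 h]
  | succ n ih =>
    rcases Nat.lt_or_ge m (n+1) with h'|h'
    · exact le_trans (ih (by omega)) (qp_mono hirr n)
    · have : m = n + 1 := by omega
      simp [this]

lemma qp_ge (hirr : Irrational α) : ∀ n, n ≤ qp α n
  | 0 => by simp
  | 1 => qp_pos hirr 1
  | n + 2 => by
    have h1 := qp_ge hirr n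
    have h2 := qp_ge hirr (n + 1)
    have h3 := qp_pos hirr n
    have h4 := aq_pos hirr (n+1)
    show n + 2 ≤ qp α (n+2)
    rw [qp]
    nlinarith

lemma qp_succ_le (hirr : Irrational α) : ∀ u, qp α (u + 1) ≤ (aq α (u + 1) + 1) * qp α u
  | 0 => by simp [qp]
  | u + 1 => by
    have h := qp_mono hirr u
    show qp α (u+2) ≤ _
    rw [qp]
    nlinarith [qp_pos hirr u, aq_pos hirr (u+1)]

lemma qe_pos (hirr : Irrational α) (h0 : 0 < α) : ∀ n, 0 < qe α n
  | 0 => by simp [qe]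
  | 1 => by simpa [qe] using cq_pos hirr h0 1
  | n + 2 => by
    have h1 := qp_pos hirr n
    have h2 := qp_pos hirr (n+1)
    have h3 := cq_pos hirr h0 (n+2)
    rw [qe]
    positivity

lemma qe_rec (hirr : Irrational α) (h0 : 0 < α) (h1 : α < 1) :
    ∀ n, qe α (n + 1) = cq α (n + 1) * qe α n
  | 0 => by simp [qe]
  | 1 => by
    have hc : cq α 2 ≠ 0 := (cq_pos hirr h0 2).ne'
    have key : cq α 1 = (aq α 1 : ℝ) + 1 / cq α 2 := by
      rw [inv_cq hirr h0 h1 1]; ring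
    show qe α 2 = cq α 2 * qe α 1
    rw [qe, qe, key]
    simp [qp]
    field_simp
  | n + 2 => by
    have hc : cq α (n + 3) ≠ 0 := (cq_pos hirr h0 (n+3)).ne'
    have key : cq α (n + 2) = (aq α (n + 2) : ℝ) + 1 / cq α (n + 3) := by
      rw [inv_cq hirr h0 h1 (n + 2)]; ring
    show qe α (n+3) = cq α (n+3) * qe α (n+2)
    rw [qe, qe, key, show qp α (n+2) = aq α (n+2) * qp α (n+1) + qp α n from rfl]
    push_cast
    field_simp
    ring

lemma qe_lt (hirr : Irrational α) (h0 : 0 < α) (h1 : α < 1) (n : ℕ) :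
    qe α n < qe α (n + 1) := by
  rw [qe_rec hirr h0 h1 n]
  nlinarith [qe_pos hirr h0 n, cq_gt_one hirr n]

lemma qe_mono (hirr : Irrational α) (h0 : 0 < α) (h1 : α < 1) {m n : ℕ} (h : m ≤ n) :
    qe α m ≤ qe α n := by
  induction n with
  | zero => simp [Nat.le_zero.1 h]
  | succ n ih =>
    rcases Nat.lt_or_ge m (n+1) with h'|h'
    · exact le_trans (ih (by omega)) (qe_lt hirr h0 h1 n).le
    · have : m = n + 1 := by omega
      simp [this]

lemma tel (hirr : Irrational α) (h0 : 0 < α) (h1 : α < 1) (u : ℕ) :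
    1 / qe α u - 1 / qe α (u + 2) = (aq α (u + 1) : ℝ) / qe α (u + 1) := by
  have e1 : qe α (u + 1) = cq α (u + 1) * qe α u := qe_rec hirr h0 h1 u
  have e2 : qe α (u + 2) = cq α (u + 2) * qe α (u + 1) := qe_rec hirr h0 h1 (u + 1)
  have key : (aq α (u+1) : ℝ) = cq α (u + 1) - 1 / cq α (u + 2) := by
    rw [inv_cq hirr h0 h1 (u+1)]; ring
  have p0 := qe_pos hirr h0 u
  have p1 := qe_pos hirr h0 (u+1)
  have c1 := cq_pos hirr h0 (u+1)
  have c2 := cq_pos hirr h0 (u+2)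
  rw [e2, e1, key]
  field_simp

/-- β_n = q_n α - p_n -/
noncomputable def bq (α : ℝ) (n : ℕ) : ℝ := (qp α n : ℝ) * α - (pn α n : ℝ)

lemma bq_step (hirr : Irrational α) (h0 : 0 < α) (h1 : α < 1) :
    ∀ n, cq α (n + 2) * bq α (n + 1) = -bq α n
  | 0 => by
    have hc2 : cq α 2 ≠ 0 := (cq_pos hirr h0 2).ne'
    have hα : α ≠ 0 := h0.ne'
    have key : (aq α 1 : ℝ) = cq α 1 - 1 / cq α 2 := by
      rw [inv_cq hirr h0 h1 1]; ring
    have hc1 : cq α 1 = 1 / α := cq_one h0 h1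
    show cq α 2 * ((qp α 1 : ℝ) * α - (pn α 1 : ℝ)) = -((qp α 0 : ℝ) * α - (pn α 0 : ℝ))
    rw [show qp α 1 = aq α 1 from rfl, show pn α 1 = 1 from rfl,
      show qp α 0 = 1 from rfl, show pn α 0 = 0 from rfl, key, hc1]
    push_cast
    field_simp
    ring
  | n + 1 => by
    show cq α (n + 3) * bq α (n + 2) = -bq α (n + 1)
    have ih := bq_step hirr h0 h1 n
    have hc3 : cq α (n + 3) ≠ 0 := (cq_pos hirr h0 (n+3)).ne'
    have key : (aq α (n + 2) : ℝ) = cq α (n + 2) - 1 / cq α (n + 3) := by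
      rw [inv_cq hirr h0 h1 (n + 2)]; ring
    have hrec : bq α (n + 2) = (aq α (n + 2) : ℝ) * bq α (n + 1) + bq α n := by
      show (qp α (n+2) : ℝ) * α - (pn α (n+2) : ℝ) = _
      rw [show qp α (n+2) = aq α (n+2) * qp α (n+1) + qp α n from rfl,
        show pn α (n+2) = aq α (n+2) * pn α (n+1) + pn α n from rfl]
      push_cast
      unfold bq
      ring
    have : bq α (n + 2) = -(1 / cq α (n + 3)) * bq α (n + 1) := by
      rw [hrec, key]
      have : (cq α (n+2) - 1 / cq α (n+3)) * bq α (n+1) + bq α n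
          = -(1/cq α (n+3)) * bq α (n+1) + (cq α (n+2) * bq α (n+1) + bq α n) := by ring
      rw [this, ih]
      ring
    rw [this]
    field_simp

lemma bq_eq (hirr : Irrational α) (h0 : 0 < α) (h1 : α < 1) :
    ∀ n, bq α n = (-1 : ℝ) ^ n / qe α (n + 1)
  | 0 => by
    have hα : α ≠ 0 := h0.ne'
    show (qp α 0 : ℝ) * α - (pn α 0 : ℝ) = _
    rw [show qp α 0 = 1 from rfl, show pn α 0 = 0 from rfl,
      show qe α 1 = cq α 1 from rfl, cq_one h0 h1]
    push_cast
    field_simp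
    ring
  | n + 1 => by
    have ih := bq_eq hirr h0 h1 n
    have h := bq_step hirr h0 h1 n
    have hc : cq α (n + 2) ≠ 0 := (cq_pos hirr h0 (n+2)).ne'
    have hq : qe α (n + 1) ≠ 0 := (qe_pos hirr h0 (n+1)).ne'
    have : bq α (n + 1) = -bq α n / cq α (n + 2) := by
      field_simp at h ⊢
      linarith [h]
    rw [this, ih, qe_rec hirr h0 h1 (n + 1)]
    field_simp
    ring

open Finset in
lemma gsplit (f : ℕ → ℝ) {r n : ℕ} (h : r + 1 ≤ n) :
    ∑ u ∈ Icc (r + 1) n, f u = f (r + 1) + ∑ u ∈ Icc (r + 2) n, f u := by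
  rw [Finset.Icc_eq_cons_Ioc h, Finset.sum_cons, ← Finset.Icc_add_one_left_eq_Ioc]
  rfl

open Finset in
lemma gsum_bounds (hirr : Irrational α) (h0 : 0 < α) (h1 : α < 1)
    (b : ℕ → ℕ) (n : ℕ) (hble : ∀ u, u ≤ n → b u ≤ aq α (u + 1)) :
    ∀ k r, n ≤ r + k →
      (∑ u ∈ Icc (r + 1) n, (-1 : ℝ) ^ (u + r) * (b u : ℝ) / qe α (u + 1)) < 1 / qe α (r + 2) ∧
      -1 / qe α (r + 1) <
        ∑ u ∈ Icc (r + 1) n, (-1 : ℝ) ^ (u + r) * (b u : ℝ) / qe α (u + 1) := by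
  intro k
  induction k with
  | zero =>
    intro r hrn
    have he : Icc (r + 1) n = ∅ := Icc_eq_empty (by omega)
    rw [he]
    simp only [Finset.sum_empty]
    refine ⟨one_div_pos.mpr (qe_pos hirr h0 (r + 2)), ?_⟩
    exact div_neg_of_neg_of_pos (by norm_num) (qe_pos hirr h0 (r + 1))
  | succ k ih =>
    intro r hrn
    rcases Nat.lt_or_ge r n with hlt | hge
    · have hsplit := gsplit (fun u => (-1 : ℝ) ^ (u + r) * (b u : ℝ) / qe α (u + 1)) hlt
      have hrest : ∑ u ∈ Icc (r + 2) n, (-1 : ℝ) ^ (u + r) * (b u : ℝ) / qe α (u + 1)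
          = -∑ u ∈ Icc (r + 2) n, (-1 : ℝ) ^ (u + (r + 1)) * (b u : ℝ) / qe α (u + 1) := by
        rw [← Finset.sum_neg_distrib]
        refine Finset.sum_congr rfl fun u _ => ?_
        rw [show u + (r + 1) = (u + r) + 1 from rfl, pow_succ]
        ring
      have ihr := ih (r + 1) (by omega)
      set G := ∑ u ∈ Icc (r + 2) n, (-1 : ℝ) ^ (u + (r + 1)) * (b u : ℝ) / qe α (u + 1) with hG
      have hfirst : (-1 : ℝ) ^ (r + 1 + r) * (b (r + 1) : ℝ) / qe α (r + 2)
          = -((b (r + 1) : ℝ) / qe α (r + 2)) := by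
        have hpow : (-1 : ℝ) ^ (r + 1 + r) = -1 := by
          rw [show r + 1 + r = 2 * r + 1 by ring, pow_succ, pow_mul]
          norm_num
        rw [hpow]; ring
      have hEq : ∑ u ∈ Icc (r + 1) n, (-1 : ℝ) ^ (u + r) * (b u : ℝ) / qe α (u + 1)
          = -((b (r + 1) : ℝ) / qe α (r + 2)) - G := by
        rw [hsplit, hrest]
        beta_reduce
        rw [hfirst]; ring
      rw [hEq]
      have pU : G < 1 / qe α (r + 3) := ihr.1
      have pL : -1 / qe α (r + 2) < G := ihr.2
      have hq1 := qe_pos hirr h0 (r + 1)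
      have hq2 := qe_pos hirr h0 (r + 2)
      have hq3 := qe_pos hirr h0 (r + 3)
      have hbnn : (0 : ℝ) ≤ (b (r + 1) : ℝ) / qe α (r + 2) := by positivity
      constructor
      · rw [neg_div] at pL
        linarith
      · have hba : (b (r + 1) : ℝ) ≤ (aq α (r + 2) : ℝ) := by
          exact_mod_cast hble (r + 1) (by omega)
        have hdiv : (b (r + 1) : ℝ) / qe α (r + 2) ≤ (aq α (r + 2) : ℝ) / qe α (r + 2) := by
          gcongr
        have htel : 1 / qe α (r + 1) - 1 / qe α (r + 3) = (aq α (r + 2) : ℝ) / qe α (r + 2) :=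
          tel hirr h0 h1 (r + 1)
        rw [neg_div]
        linarith
    · have he : Icc (r + 1) n = ∅ := Icc_eq_empty (by omega)
      rw [he]
      simp only [Finset.sum_empty]
      refine ⟨one_div_pos.mpr (qe_pos hirr h0 (r + 2)), ?_⟩
      exact div_neg_of_neg_of_pos (by norm_num) (qe_pos hirr h0 (r + 1))

variable {N : ℕ}

lemma ostN_le (hN : 1 ≤ N) : qp α (ostN α N) ≤ N :=
  Nat.findGreatest_spec (P := fun r => qp α r ≤ N) (Nat.zero_le N) (by simpa [qp] using hN)

lemma ostN_lt (hirr : Irrational α) (hN : 1 ≤ N) : N < qp α (ostN α N + 1) := by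
  by_contra h
  push_neg at h
  rcases Nat.lt_or_ge N (ostN α N + 1) with h' | h'
  · have := qp_ge hirr (ostN α N + 1)
    omega
  · have h2 : ostN α N + 1 ≤ ostN α N :=
      Nat.le_findGreatest (P := fun r => qp α r ≤ N) h' h
    omega

lemma ostM_rec (hr : r < ostN α N) :
    ostM α N (ostN α N - r) = ostM α N (ostN α N - (r + 1)) % qp α (r + 1) := by
  rw [show ostN α N - r = (ostN α N - (r + 1)) + 1 by omega, ostM,
    show ostN α N - (ostN α N - (r + 1)) = r + 1 by omega]

lemma ostM_lt (hirr : Irrational α) (hN : 1 ≤ N) {r : ℕ} (hr : r ≤ ostN α N) :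
    ostM α N (ostN α N - r) < qp α (r + 1) := by
  rcases Nat.lt_or_ge r (ostN α N) with h | h
  · rw [ostM_rec h]
    exact Nat.mod_lt _ (qp_pos hirr (r + 1))
  · have : r = ostN α N := by omega
    subst this
    simpa [ostM] using ostN_lt hirr hN

lemma digit_le (hirr : Irrational α) (hN : 1 ≤ N) {u : ℕ} (hu : u ≤ ostN α N) :
    ostDigit α N u ≤ aq α (u + 1) := by
  have h1 : ostM α N (ostN α N - u) < qp α (u + 1) := ostM_lt hirr hN hu
  have h2 : qp α (u + 1) ≤ (aq α (u + 1) + 1) * qp α u := qp_succ_le hirr u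
  have h3 : 0 < qp α u := qp_pos hirr u
  have h4 : ostM α N (ostN α N - u) / qp α u < aq α (u + 1) + 1 :=
    Nat.div_lt_of_lt_mul (lt_of_lt_of_le h1 (le_of_eq_of_le (by ring_nf) h2 |>.trans_eq (mul_comm _ _)))
  unfold ostDigit
  omega

lemma digit_lt (hirr : Irrational α) (hN : 1 ≤ N) {r : ℕ} (hr : r < ostN α N)
    (hb : ostDigit α N r ≠ 0) : ostDigit α N (r + 1) < aq α (r + 2) := by
  set M1 := ostM α N (ostN α N - (r + 1)) with hM1
  have hM0 : ostM α N (ostN α N - r) = M1 % qp α (r + 1) := ostM_rec hr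
  have hq : 0 < qp α r := qp_pos hirr r
  have hq1 : 0 < qp α (r + 1) := qp_pos hirr (r + 1)
  have hge : qp α r ≤ M1 % qp α (r + 1) := by
    by_contra h
    push_neg at h
    exact hb (by unfold ostDigit; rw [hM0]; exact Nat.div_eq_of_lt h)
  have hmod : M1 % qp α (r + 1) = M1 - qp α (r + 1) * (M1 / qp α (r + 1)) := by
    have := Nat.mod_add_div M1 (qp α (r + 1))
    omega
  have hM1lt : M1 < qp α (r + 2) := ostM_lt hirr hN (by omega)
  have hq2 : qp α (r + 2) = aq α (r + 2) * qp α (r + 1) + qp α r := rfl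
  have hdig : ostDigit α N (r + 1) = M1 / qp α (r + 1) := rfl
  have hdm : qp α (r + 1) * (M1 / qp α (r + 1)) ≤ M1 := Nat.mul_div_le M1 _
  rw [hdig]
  nlinarith [Nat.mod_add_div M1 (qp α (r + 1))]

lemma digit0 (hirr : Irrational α) (hN : 1 ≤ N) (h : ostDigit α N 0 ≠ 0) :
    2 ≤ aq α 1 := by
  have h1 : ostM α N (ostN α N - 0) < qp α 1 := ostM_lt hirr hN (Nat.zero_le _)
  have h2 : ostDigit α N 0 = ostM α N (ostN α N - 0) / qp α 0 := rfl
  have hq : qp α 0 = 1 := rfl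
  have hqp1 : qp α 1 = aq α 1 := rfl
  rw [hq, Nat.div_one] at h2
  omega

lemma qe1_gt (hirr : Irrational α) (h0 : 0 < α) (h1 : α < 1) (h : 2 ≤ aq α 1) :
    2 < qe α 1 := by
  have key : 1 / cq α 2 = cq α 1 - (aq α 1 : ℝ) := inv_cq hirr h0 h1 1
  have hc2 : 0 < cq α 2 := cq_pos hirr h0 2
  have : (0:ℝ) < 1 / cq α 2 := by positivity
  have ha : (2:ℝ) ≤ (aq α 1 : ℝ) := by exact_mod_cast h
  show (2:ℝ) < cq α 1
  linarith

lemma qe2_gt (hirr : Irrational α) (h0 : 0 < α) (h1 : α < 1) : 2 < qe α 2 := by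
  have hc2 : 1 < cq α 2 := cq_gt_one hirr 1
  have ha : 1 ≤ aq α 1 := aq_pos hirr 0
  have ha' : (1:ℝ) ≤ (qp α 1 : ℝ) := by
    have : qp α 1 = aq α 1 := rfl
    rw [this]; exact_mod_cast ha
  show (2:ℝ) < cq α 2 * (qp α 1 : ℝ) + (qp α 0 : ℝ)
  have : (qp α 0 : ℝ) = 1 := by norm_num [qp]
  nlinarith

open Finset in
lemma sum_identity (hirr : Irrational α) (h0 : 0 < α) (h1 : α < 1)
    (b : ℕ → ℕ) (r n : ℕ) :
    (-1:ℝ)^r * ((∑ u ∈ Icc (r+1) n, (b u : ℝ) * (qp α u : ℝ) * α) -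
      ((∑ u ∈ Icc (r+1) n, (b u : ℤ) * (pn α u : ℤ) : ℤ) : ℝ))
    = ∑ u ∈ Icc (r+1) n, (-1:ℝ)^(u+r) * (b u : ℝ) / qe α (u+1) := by
  push_cast
  rw [← Finset.sum_sub_distrib, Finset.mul_sum]
  refine Finset.sum_congr rfl fun u _ => ?_
  have hb := bq_eq hirr h0 h1 u
  unfold bq at hb
  have hq : qe α (u+1) ≠ 0 := (qe_pos hirr h0 (u+1)).ne'
  rw [show (b u : ℝ) * (qp α u : ℝ) * α - (b u : ℝ) * (pn α u : ℝ)
      = (b u : ℝ) * ((qp α u : ℝ) * α - (pn α u : ℝ)) by ring, hb, pow_add]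
  field_simp

open Finset in
lemma g_lower (hirr : Irrational α) (h0 : 0 < α) (h1 : α < 1)
    (b : ℕ → ℕ) (n : ℕ) (hble : ∀ u, u ≤ n → b u ≤ aq α (u + 1)) (r : ℕ)
    (hb2 : r < n → b (r + 1) < aq α (r + 2)) :
    -1 / qe α (r + 1) + 1 / qe α (r + 2) <
      ∑ u ∈ Icc (r + 1) n, (-1 : ℝ) ^ (u + r) * (b u : ℝ) / qe α (u + 1) := by
  have hq1 := qe_pos hirr h0 (r + 1)
  have hq2 := qe_pos hirr h0 (r + 2)
  have hq3 := qe_pos hirr h0 (r + 3)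
  rcases Nat.lt_or_ge r n with hlt | hge
  · have hsplit := gsplit (fun u => (-1 : ℝ) ^ (u + r) * (b u : ℝ) / qe α (u + 1)) hlt
    have hrest : ∑ u ∈ Icc (r + 2) n, (-1 : ℝ) ^ (u + r) * (b u : ℝ) / qe α (u + 1)
        = -∑ u ∈ Icc (r + 2) n, (-1 : ℝ) ^ (u + (r + 1)) * (b u : ℝ) / qe α (u + 1) := by
      rw [← Finset.sum_neg_distrib]
      refine Finset.sum_congr rfl fun u _ => ?_
      rw [show u + (r + 1) = (u + r) + 1 from rfl, pow_succ]
      ring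
    set G := ∑ u ∈ Icc (r + 2) n, (-1 : ℝ) ^ (u + (r + 1)) * (b u : ℝ) / qe α (u + 1) with hG
    have hfirst : (-1 : ℝ) ^ (r + 1 + r) * (b (r + 1) : ℝ) / qe α (r + 2)
        = -((b (r + 1) : ℝ) / qe α (r + 2)) := by
      have hpow : (-1 : ℝ) ^ (r + 1 + r) = -1 := by
        rw [show r + 1 + r = 2 * r + 1 by ring, pow_succ, pow_mul]
        norm_num
      rw [hpow]; ring
    have hEq : ∑ u ∈ Icc (r + 1) n, (-1 : ℝ) ^ (u + r) * (b u : ℝ) / qe α (u + 1)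
        = -((b (r + 1) : ℝ) / qe α (r + 2)) - G := by
      rw [hsplit, hrest]
      beta_reduce
      rw [hfirst]; ring
    rw [hEq]
    have pU : G < 1 / qe α (r + 3) :=
      (gsum_bounds hirr h0 h1 b n hble n (r + 1) (by omega)).1
    have hba : (b (r + 1) : ℝ) ≤ (aq α (r + 2) : ℝ) - 1 := by
      have := hb2 hlt
      have h' : b (r + 1) + 1 ≤ aq α (r + 2) := this
      have : ((b (r + 1) : ℝ) + 1) ≤ (aq α (r + 2) : ℝ) := by exact_mod_cast h'
      linarith
    have hdiv : (b (r + 1) : ℝ) / qe α (r + 2) ≤ ((aq α (r + 2) : ℝ) - 1) / qe α (r + 2) := by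
      gcongr
    have htel : 1 / qe α (r + 1) - 1 / qe α (r + 3) = (aq α (r + 2) : ℝ) / qe α (r + 2) :=
      tel hirr h0 h1 (r + 1)
    have hsub : ((aq α (r + 2) : ℝ) - 1) / qe α (r + 2)
        = (aq α (r + 2) : ℝ) / qe α (r + 2) - 1 / qe α (r + 2) := by
      field_simp
    rw [neg_div]
    linarith
  · have he : Icc (r + 1) n = ∅ := Icc_eq_empty (by omega)
    rw [he]
    simp only [Finset.sum_empty]
    have hlt12 : 1 / qe α (r + 2) < 1 / qe α (r + 1) :=
      one_div_lt_one_div_of_lt hq1 (qe_lt hirr h0 h1 (r + 1))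
    rw [neg_div]
    linarith


/-- For a canonical Ostrowski index `r ≤ n` with `b_r ≠ 0`, the signed fractional part of
`Σ_{u=r+1}^{n} b_u q_u α` satisfies
`−1/q'_{r+1} + 1/q'_{r+2} < (−1)^r·{{Σ}} < 1/q'_{r+2}`; in particular `‖Σ‖ < 1/q'_{r+1}`. -/
theorem stmt6 (α : ℝ) (hirr : Irrational α) (h0 : 0 < α) (h1 : α < 1)
    (N : ℕ) (hN : 1 ≤ N) (r : ℕ) (hr : r ≤ ostN α N) (hb : ostDigit α N r ≠ 0) :
    (-1 / qe α (r + 1) + 1 / qe α (r + 2) <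
        (-1 : ℝ) ^ r *
          ((∑ u ∈ Finset.Icc (r + 1) (ostN α N), (ostDigit α N u : ℝ) * (qp α u : ℝ) * α) -
            (round (∑ u ∈ Finset.Icc (r + 1) (ostN α N),
              (ostDigit α N u : ℝ) * (qp α u : ℝ) * α) : ℤ)) ∧
      (-1 : ℝ) ^ r *
          ((∑ u ∈ Finset.Icc (r + 1) (ostN α N), (ostDigit α N u : ℝ) * (qp α u : ℝ) * α) -
            (round (∑ u ∈ Finset.Icc (r + 1) (ostN α N),
              (ostDigit α N u : ℝ) * (qp α u : ℝ) * α) : ℤ)) < 1 / qe α (r + 2)) ∧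
    |(∑ u ∈ Finset.Icc (r + 1) (ostN α N), (ostDigit α N u : ℝ) * (qp α u : ℝ) * α) -
        (round (∑ u ∈ Finset.Icc (r + 1) (ostN α N),
          (ostDigit α N u : ℝ) * (qp α u : ℝ) * α) : ℤ)| < 1 / qe α (r + 1) := by
  set n := ostN α N with hn
  set S := ∑ u ∈ Finset.Icc (r + 1) n, (ostDigit α N u : ℝ) * (qp α u : ℝ) * α with hS
  set P : ℤ := ∑ u ∈ Finset.Icc (r + 1) n, (ostDigit α N u : ℤ) * (pn α u : ℤ) with hP
  set g := ∑ u ∈ Finset.Icc (r + 1) n, (-1 : ℝ) ^ (u + r) * (ostDigit α N u : ℝ) / qe α (u + 1)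
    with hg
  have hble : ∀ u, u ≤ n → ostDigit α N u ≤ aq α (u + 1) := fun u hu => digit_le hirr hN hu
  have hid : (-1 : ℝ) ^ r * (S - (P : ℝ)) = g :=
    sum_identity hirr h0 h1 (ostDigit α N) r n
  have gU : g < 1 / qe α (r + 2) :=
    (gsum_bounds hirr h0 h1 (ostDigit α N) n hble n r (by omega)).1
  have gL : -1 / qe α (r + 1) + 1 / qe α (r + 2) < g :=
    g_lower hirr h0 h1 (ostDigit α N) n hble r (fun hlt => digit_lt hirr hN hlt hb)
  have hq1 := qe_pos hirr h0 (r + 1)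
  have hq2 := qe_pos hirr h0 (r + 2)
  have h12 : 1 / qe α (r + 2) < 1 / qe α (r + 1) :=
    one_div_lt_one_div_of_lt hq1 (qe_lt hirr h0 h1 (r + 1))
  have habs : |S - (P : ℝ)| < 1 / qe α (r + 1) := by
    have hre : |S - (P : ℝ)| = |(-1 : ℝ) ^ r * (S - (P : ℝ))| := by
      rw [abs_mul, abs_pow, abs_neg, abs_one, one_pow, one_mul]
    rw [hre, hid, abs_lt]
    constructor
    · have : (0:ℝ) < 1 / qe α (r + 2) := by positivity
      rw [neg_div] at gL
      linarith
    · linarith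
  have h2lt : 2 < qe α (r + 1) := by
    rcases Nat.eq_zero_or_pos r with rfl | hrpos
    · exact qe1_gt hirr h0 h1 (digit0 hirr hN hb)
    · calc (2:ℝ) < qe α 2 := qe2_gt hirr h0 h1
        _ ≤ qe α (r + 1) := qe_mono hirr h0 h1 (by omega)
  have hhalf : 1 / qe α (r + 1) < 1 / 2 :=
    one_div_lt_one_div_of_lt (by norm_num) h2lt
  have hround : round S = P := by
    have hSexp : S = (P : ℝ) + (S - (P : ℝ)) := by ring
    have h := abs_lt.1 habs
    have hmem : S - (P : ℝ) ∈ Set.Ico (-(1/2) : ℝ) (1/2) :=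
      ⟨by linarith, by linarith⟩
    rw [hSexp, round_intCast_add, round_eq_zero_iff.2 hmem, add_zero]
  rw [hround]
  refine ⟨⟨?_, ?_⟩, habs⟩
  · rw [hid]; exact gL
  · rw [hid]; exact gU
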